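/- Let Ω ⊆ ℝ³ be open and connected and R : Ω → SO(3) a C² matrix field with curl R (rowwise) equal to a constant matrix α ∈ ℝ³ˣ³. Then R is constant (and α = 0). -/

import Mathlib

open Matrix

/-- Partial derivative in the `i`-th coordinate direction. -/
noncomputable def pd {n : ℕ} (i : Fin n) (f : (Fin n → ℝ) → ℝ) (x : Fin n → ℝ) : ℝ :=
  fderiv ℝ f x (Pi.single i 1)

/-- The Levi-Civita symbol in dimension 3. -/
def eps (i j k : Fin 3) : ℝ :=
  if (i, j, k) = (0, 1, 2) ∨ (i, j, k) = (1, 2, 0) ∨ (i, j, k) = (2, 0, 1) then 1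
  else if (i, j, k) = (2, 1, 0) ∨ (i, j, k) = (0, 2, 1) ∨ (i, j, k) = (1, 0, 2) then -1
  else 0

/-!
Write `Bⱼ = Rᵀ ∂ⱼR`; it is skew-symmetric because `R` is orthogonal. Rowwise, the curl condition
says that `M = Rᵀ α` is Nye's linear function of the axial vectors of the `Bⱼ`; inverting it
expresses each `Bⱼ` linearly through `M` alone, and then `∂ᵢM = -Bᵢ M`. Hence the symmetry of
second derivatives, `∂ᵢ(R Bⱼ) = ∂ⱼ(R Bᵢ)`, becomes a system of quadratic equations in `M`, and the
sum of three of them is a positive definite quadratic form. So `M = 0`, which forces `∇R = 0`;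
`R` is constant on the connected set `Ω`, and `α = R M = 0`.
-/

open Filter Topology

section PartialDerivatives

variable {n : ℕ} {x : Fin n → ℝ} {i : Fin n}

lemma pd_congr {f g : (Fin n → ℝ) → ℝ} (h : f =ᶠ[𝓝 x] g) : pd i f x = pd i g x := by
  rw [pd, pd, h.fderiv_eq]

lemma pd_const_mul {f : (Fin n → ℝ) → ℝ} (c : ℝ) (hf : DifferentiableAt ℝ f x) :
    pd i (fun y => c * f y) x = c * pd i f x := by
  simp [pd, fderiv_const_mul hf]

lemma pd_mul {f g : (Fin n → ℝ) → ℝ} (hf : DifferentiableAt ℝ f x)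
    (hg : DifferentiableAt ℝ g x) :
    pd i (fun y => f y * g y) x = pd i f x * g x + f x * pd i g x := by
  simp only [pd, fderiv_fun_mul hf hg, _root_.add_apply,
    _root_.smul_apply, smul_eq_mul]
  ring

lemma pd_sum {ι : Type*} (s : Finset ι) {f : ι → (Fin n → ℝ) → ℝ}
    (hf : ∀ k ∈ s, DifferentiableAt ℝ (f k) x) :
    pd i (fun y => ∑ k ∈ s, f k y) x = ∑ k ∈ s, pd i (f k) x := by
  simp [pd, fderiv_fun_sum hf]

lemma pd_comm {f : (Fin n → ℝ) → ℝ} (hf : ContDiffAt ℝ 2 f x) (i j : Fin n) :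
    pd i (pd j f) x = pd j (pd i f) x := by
  have hdiff : DifferentiableAt ℝ (fderiv ℝ f) x :=
    (hf.fderiv_right (m := 1) (by norm_num)).differentiableAt one_ne_zero
  have hpd (v w : Fin n → ℝ) :
      fderiv ℝ (fun y => fderiv ℝ f y w) x v = fderiv ℝ (fderiv ℝ f) x v w := by
    simp [fderiv_clm_apply hdiff (differentiableAt_const w)]
  rw [pd, pd]
  exact (hpd _ _).trans (((hf.isSymmSndFDerivAt (by norm_num)).eq _ _).trans (hpd _ _).symm)

lemma fderiv_eq_zero_of_pd_eq_zero {f : (Fin n → ℝ) → ℝ} (h : ∀ i, pd i f x = 0) :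
    fderiv ℝ f x = 0 :=
  ContinuousLinearMap.coe_injective <| (Pi.basisFun ℝ (Fin n)).ext fun i => by simpa [pd] using h i

lemma IsOpen.is_const_of_pd_eq_zero {Ω : Set (Fin n → ℝ)} (hΩ : IsOpen Ω) (hconn : IsPreconnected Ω)
    {f : (Fin n → ℝ) → ℝ} (hf : DifferentiableOn ℝ f Ω) (h : ∀ x ∈ Ω, ∀ i, pd i f x = 0)
    {x y : Fin n → ℝ} (hx : x ∈ Ω) (hy : y ∈ Ω) : f x = f y :=
  hΩ.is_const_of_fderiv_eq_zero hconn hf (fun z hz => fderiv_eq_zero_of_pd_eq_zero (h z hz)) hx hy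

end PartialDerivatives

section MatrixPartialDerivatives

variable {n : ℕ} {ι κ ι' κ' : Type*} {x : Fin n → ℝ} {i : Fin n}

noncomputable def pdMatrix (i : Fin n) (F : (Fin n → ℝ) → Matrix ι κ ℝ) (x : Fin n → ℝ) :
    Matrix ι κ ℝ :=
  Matrix.of fun a b => pd i (fun y => F y a b) x

def EntrywiseDifferentiableAt (F : (Fin n → ℝ) → Matrix ι κ ℝ) (x : Fin n → ℝ) : Prop :=
  ∀ a b, DifferentiableAt ℝ (fun y => F y a b) x

lemma entrywiseDifferentiableAt_of_contDiffOn {Ω : Set (Fin n → ℝ)} {k : WithTop ℕ∞}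
    {F : (Fin n → ℝ) → Matrix ι κ ℝ} (hF : ∀ a b, ContDiffOn ℝ k (fun y => F y a b) Ω)
    (hk : k ≠ 0) (hΩ : Ω ∈ 𝓝 x) : EntrywiseDifferentiableAt F x :=
  fun a b => ((hF a b).contDiffAt hΩ).differentiableAt hk

lemma entrywiseDifferentiableAt_const (A : Matrix ι κ ℝ) :
    EntrywiseDifferentiableAt (fun _ => A) x :=
  fun _ _ => differentiableAt_const _

lemma EntrywiseDifferentiableAt.transpose {F : (Fin n → ℝ) → Matrix ι κ ℝ}
    (hF : EntrywiseDifferentiableAt F x) : EntrywiseDifferentiableAt (fun y => (F y)ᵀ) x :=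
  fun a b => hF b a

lemma pdMatrix_const (A : Matrix ι κ ℝ) : pdMatrix i (fun _ => A) x = 0 := by
  ext a b
  simp [pdMatrix, pd]

lemma pdMatrix_transpose (F : (Fin n → ℝ) → Matrix ι κ ℝ) :
    pdMatrix i (fun y => (F y)ᵀ) x = (pdMatrix i F x)ᵀ :=
  rfl

lemma pdMatrix_congr {F G : (Fin n → ℝ) → Matrix ι κ ℝ} (h : F =ᶠ[𝓝 x] G) :
    pdMatrix i F x = pdMatrix i G x := by
  ext a b
  exact pd_congr (h.mono fun y hy => congrFun₂ hy a b)

lemma pdMatrix_comm {F : (Fin n → ℝ) → Matrix ι κ ℝ}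
    (hF : ∀ a b, ContDiffAt ℝ 2 (fun y => F y a b) x) (i j : Fin n) :
    pdMatrix i (pdMatrix j F) x = pdMatrix j (pdMatrix i F) x := by
  ext a b
  exact pd_comm (hF a b) i j

variable [Fintype ι]

lemma EntrywiseDifferentiableAt.mul [Fintype ι'] {F : (Fin n → ℝ) → Matrix ι' ι ℝ}
    {G : (Fin n → ℝ) → Matrix ι κ ℝ} (hF : EntrywiseDifferentiableAt F x)
    (hG : EntrywiseDifferentiableAt G x) :
    EntrywiseDifferentiableAt (fun y => F y * G y) x := fun a b => by
  simp only [Matrix.mul_apply]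
  exact DifferentiableAt.fun_sum fun c _ => (hF a c).mul (hG c b)

lemma pdMatrix_mul [Fintype ι'] {F : (Fin n → ℝ) → Matrix ι' ι ℝ}
    {G : (Fin n → ℝ) → Matrix ι κ ℝ} (hF : EntrywiseDifferentiableAt F x)
    (hG : EntrywiseDifferentiableAt G x) :
    pdMatrix i (fun y => F y * G y) x = pdMatrix i F x * G x + F x * pdMatrix i G x := by
  ext a b
  simp only [pdMatrix, Matrix.mul_apply, Matrix.add_apply, Matrix.of_apply,
    ← Finset.sum_add_distrib]
  rw [pd_sum (f := fun c y => F y a c * G y c b) _ fun c _ => (hF a c).mul (hG c b)]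
  exact Finset.sum_congr rfl fun c _ => pd_mul (hF a c) (hG c b)

variable [Fintype κ] [DecidableEq ι] [DecidableEq κ]

lemma LinearMap.apply_eq_sum_single (L : Matrix ι κ ℝ →ₗ[ℝ] Matrix ι' κ' ℝ) (A : Matrix ι κ ℝ)
    (a : ι') (b : κ') : L A a b = ∑ c, ∑ d, L (Matrix.single c d 1) a b * A c d := by
  have hA : A = ∑ c, ∑ d, A c d • Matrix.single c d (1 : ℝ) := by
    simpa [Matrix.smul_single] using Matrix.matrix_eq_sum_single A
  conv_lhs => rw [hA]
  simp only [map_sum, map_smul, Matrix.sum_apply, Matrix.smul_apply, smul_eq_mul, mul_comm]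

lemma EntrywiseDifferentiableAt.map {F : (Fin n → ℝ) → Matrix ι κ ℝ}
    (hF : EntrywiseDifferentiableAt F x) (L : Matrix ι κ ℝ →ₗ[ℝ] Matrix ι' κ' ℝ) :
    EntrywiseDifferentiableAt (fun y => L (F y)) x := fun a b => by
  rw [show (fun y => L (F y) a b) = _ from funext fun y => L.apply_eq_sum_single (F y) a b]
  exact DifferentiableAt.fun_sum fun c _ => DifferentiableAt.fun_sum fun d _ =>
    (hF c d).const_mul _

lemma pdMatrix_map {F : (Fin n → ℝ) → Matrix ι κ ℝ} (hF : EntrywiseDifferentiableAt F x)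
    (L : Matrix ι κ ℝ →ₗ[ℝ] Matrix ι' κ' ℝ) :
    pdMatrix i (fun y => L (F y)) x = L (pdMatrix i F x) := by
  ext a b
  rw [pdMatrix, pdMatrix, Matrix.of_apply, L.apply_eq_sum_single,
    show (fun y => L (F y) a b) = _ from funext fun y => L.apply_eq_sum_single (F y) a b]
  rw [pd_sum (f := fun c y => ∑ d, L (Matrix.single c d 1) a b * F y c d) _
    fun c _ => DifferentiableAt.fun_sum fun d _ => (hF c d).const_mul _]
  refine Finset.sum_congr rfl fun c _ => ?_
  rw [pd_sum (f := fun d y => L (Matrix.single c d 1) a b * F y c d) _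
    fun d _ => (hF c d).const_mul _]
  exact Finset.sum_congr rfl fun d _ => pd_const_mul _ (hF c d)

end MatrixPartialDerivatives

def skewOfAxial (v : Fin 3 → ℝ) : Matrix (Fin 3) (Fin 3) ℝ :=
  Matrix.of fun p k => ∑ q, eps p k q * v q

lemma transpose_skewOfAxial (v : Fin 3 → ℝ) : (skewOfAxial v)ᵀ = -skewOfAxial v := by
  ext p k
  fin_cases p <;> fin_cases k <;> simp [skewOfAxial, Fin.sum_univ_three, eps]

lemma eq_skewOfAxial_of_transpose_eq_neg {A : Matrix (Fin 3) (Fin 3) ℝ} (hA : Aᵀ = -A) :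
    A = skewOfAxial ![A 1 2, A 2 0, A 0 1] := by
  have h (p k : Fin 3) : A k p = -A p k := by simpa using congrFun₂ hA p k
  ext p k
  fin_cases p <;> fin_cases k <;> simp [skewOfAxial, Fin.sum_univ_three, eps] <;>
    linarith [h 0 0, h 1 1, h 2 2, h 0 1, h 0 2, h 1 2]

/-- `G j` plays the role of `∂ⱼ` of a matrix field; this is its rowwise curl. -/
def curlOfPartials (G : Fin 3 → Matrix (Fin 3) (Fin 3) ℝ) : Matrix (Fin 3) (Fin 3) ℝ :=
  Matrix.of fun i l => ∑ j, ∑ k, eps l j k * G j i k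

lemma curlOfPartials_mul_left (A : Matrix (Fin 3) (Fin 3) ℝ)
    (G : Fin 3 → Matrix (Fin 3) (Fin 3) ℝ) :
    curlOfPartials (fun j => A * G j) = A * curlOfPartials G := by
  ext i l
  simp only [curlOfPartials, Matrix.of_apply, Matrix.mul_apply, Fin.sum_univ_three]
  ring

lemma curlOfPartials_skewOfAxial (t : Matrix (Fin 3) (Fin 3) ℝ) :
    curlOfPartials (fun j => skewOfAxial (t j)) = t - t.trace • 1 := by
  ext p l
  fin_cases p <;> fin_cases l <;>
    simp [curlOfPartials, skewOfAxial, Fin.sum_univ_three, Matrix.trace_fin_three, eps] <;> ring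

/-- Inverts Nye's formula `curlOfPartials_skewOfAxial`: if `M = t - (tr t) • 1`, then row `j` of
`M - (tr M / 2) • 1` is `t j`. -/
noncomputable def connectionOfCurl (j : Fin 3) :
    Matrix (Fin 3) (Fin 3) ℝ →ₗ[ℝ] Matrix (Fin 3) (Fin 3) ℝ where
  toFun M := skewOfAxial ((M - (M.trace / 2) • 1) j)
  map_add' M N := by
    ext p k
    simp only [skewOfAxial, Matrix.trace_add, Matrix.sub_apply, Matrix.add_apply,
      Matrix.smul_apply, smul_eq_mul, Fin.sum_univ_three, Matrix.of_apply]
    ring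
  map_smul' c M := by
    ext p k
    simp only [skewOfAxial, Matrix.trace_smul, smul_eq_mul, Matrix.sub_apply, Matrix.smul_apply,
      Fin.sum_univ_three, Matrix.of_apply, RingHom.id_apply]
    ring

lemma transpose_connectionOfCurl (j : Fin 3) (M : Matrix (Fin 3) (Fin 3) ℝ) :
    (connectionOfCurl j M)ᵀ = -connectionOfCurl j M :=
  transpose_skewOfAxial _

lemma connectionOfCurl_sub_trace_smul_one (t : Matrix (Fin 3) (Fin 3) ℝ) (j : Fin 3) :
    connectionOfCurl j (t - t.trace • 1) = skewOfAxial (t j) := by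
  have htrace : (t - t.trace • 1).trace = -2 * t.trace := by
    simp only [Matrix.trace_sub, Matrix.trace_smul, Matrix.trace_one, Fintype.card_fin,
      Nat.cast_ofNat, smul_eq_mul]
    ring
  simp only [connectionOfCurl, LinearMap.coe_mk, AddHom.coe_mk, htrace]
  congr 1
  ext q
  simp only [Matrix.sub_apply, Matrix.smul_apply, smul_eq_mul]
  ring

lemma eq_connectionOfCurl_of_transpose_eq_neg {C : Fin 3 → Matrix (Fin 3) (Fin 3) ℝ}
    (hC : ∀ j, (C j)ᵀ = -C j) (j : Fin 3) :
    C j = connectionOfCurl j (curlOfPartials C) := by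
  set t := Matrix.of fun j => ![C j 1 2, C j 2 0, C j 0 1]
  have hCt : C = fun j => skewOfAxial (t j) :=
    funext fun j => eq_skewOfAxial_of_transpose_eq_neg (hC j)
  rw [hCt, curlOfPartials_skewOfAxial, connectionOfCurl_sub_trace_smul_one]

/-- If `∂ⱼR = R Bⱼ` with `Bⱼ = connectionOfCurl j M` and `∂ᵢM = -Bᵢ M`, this is
`Rᵀ (∂ᵢ∂ⱼR - ∂ⱼ∂ᵢR)`. -/
noncomputable def compatibilityDefect (M : Matrix (Fin 3) (Fin 3) ℝ) (i j : Fin 3) :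
    Matrix (Fin 3) (Fin 3) ℝ :=
  connectionOfCurl i M * connectionOfCurl j M + connectionOfCurl j (-(connectionOfCurl i M * M))
    - (connectionOfCurl j M * connectionOfCurl i M
      + connectionOfCurl i (-(connectionOfCurl j M * M)))

lemma compatibilityDefect_offDiagonal_sum (M : Matrix (Fin 3) (Fin 3) ℝ) :
    compatibilityDefect M 0 1 0 1 + compatibilityDefect M 0 2 0 2 + compatibilityDefect M 1 2 1 2
      = (Mᵀ * M).trace + (M * M).trace / 2 - M.trace ^ 2 / 4 := by
  simp [compatibilityDefect, connectionOfCurl, skewOfAxial, Matrix.mul_apply, Fin.sum_univ_three,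
    Matrix.trace_fin_three, eps]
  ring

lemma eq_zero_of_compatibilityDefect_eq_zero {M : Matrix (Fin 3) (Fin 3) ℝ}
    (h : ∀ i j, compatibilityDefect M i j = 0) : M = 0 := by
  have hform := compatibilityDefect_offDiagonal_sum M
  simp only [h, Matrix.zero_apply, add_zero] at hform
  have hnonneg : 0 ≤ (Mᵀ * M).trace := by
    simpa using (Matrix.posSemidef_conjTranspose_mul_self M).trace_nonneg
  -- `tr (Mᵀ M) + tr (M M) - (tr M)² / 2` is a sum of squares
  have hle : (Mᵀ * M).trace ≤ 0 := by
    simp only [Matrix.trace_fin_three, Matrix.mul_apply, Fin.sum_univ_three,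
      Matrix.transpose_apply] at hform ⊢
    nlinarith [sq_nonneg (M 0 0 - M 1 1), sq_nonneg (M 0 0 - M 2 2), sq_nonneg (M 1 1 - M 2 2),
      sq_nonneg (M 0 1 + M 1 0), sq_nonneg (M 0 2 + M 2 0), sq_nonneg (M 1 2 + M 2 1)]
  simpa using Matrix.trace_conjTranspose_mul_self_eq_zero_iff.mp (le_antisymm hle hnonneg)

section RotationFields

variable {F : (Fin 3 → ℝ) → Matrix (Fin 3) (Fin 3) ℝ} {α : Matrix (Fin 3) (Fin 3) ℝ}
  {x : Fin 3 → ℝ}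

lemma pdMatrix_eq_mul_connectionOfCurl (hF : EntrywiseDifferentiableAt F x)
    (horth : ∀ᶠ y in 𝓝 x, (F y)ᵀ * F y = 1)
    (hcurl : curlOfPartials (fun j => pdMatrix j F x) = α) (j : Fin 3) :
    pdMatrix j F x = F x * connectionOfCurl j ((F x)ᵀ * α) := by
  have hskew (j : Fin 3) : ((F x)ᵀ * pdMatrix j F x)ᵀ = -((F x)ᵀ * pdMatrix j F x) := by
    have h := pdMatrix_congr (i := j) horth
    rw [pdMatrix_mul hF.transpose hF, pdMatrix_const, pdMatrix_transpose] at h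
    rw [Matrix.transpose_mul, Matrix.transpose_transpose, eq_neg_iff_add_eq_zero, h]
  have hright : F x * (F x)ᵀ = 1 := mul_eq_one_comm.mp horth.self_of_nhds
  rw [← hcurl, ← curlOfPartials_mul_left,
    ← eq_connectionOfCurl_of_transpose_eq_neg (C := fun j => (F x)ᵀ * pdMatrix j F x) hskew,
    ← Matrix.mul_assoc, hright, Matrix.one_mul]

variable {Ω : Set (Fin 3 → ℝ)}

lemma transpose_mul_eq_zero_of_curl_eq_const (hΩ : IsOpen Ω)
    (hF : ∀ a b, ContDiffOn ℝ 2 (fun y => F y a b) Ω)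
    (horth : ∀ y ∈ Ω, (F y)ᵀ * F y = 1)
    (hcurl : ∀ y ∈ Ω, curlOfPartials (fun j => pdMatrix j F y) = α) (hx : x ∈ Ω) :
    (F x)ᵀ * α = 0 := by
  have hdiff (y) (hy : y ∈ Ω) : EntrywiseDifferentiableAt F y :=
    entrywiseDifferentiableAt_of_contDiffOn hF two_ne_zero (hΩ.mem_nhds hy)
  have horth' (y) (hy : y ∈ Ω) : ∀ᶠ z in 𝓝 y, (F z)ᵀ * F z = 1 :=
    eventually_of_mem (hΩ.mem_nhds hy) horth
  have hpd (y) (hy : y ∈ Ω) :=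
    pdMatrix_eq_mul_connectionOfCurl (hdiff y hy) (horth' y hy) (hcurl y hy)
  set M := fun y => (F y)ᵀ * α
  set B := fun i => connectionOfCurl i (M x)
  have hM : EntrywiseDifferentiableAt M x :=
    (hdiff x hx).transpose.mul (entrywiseDifferentiableAt_const α)
  have hpdM (i : Fin 3) : pdMatrix i M x = -(B i * M x) := by
    rw [pdMatrix_mul (hdiff x hx).transpose (entrywiseDifferentiableAt_const α), pdMatrix_const,
      Matrix.mul_zero, add_zero, pdMatrix_transpose, hpd x hx, Matrix.transpose_mul,
      transpose_connectionOfCurl, Matrix.neg_mul, neg_mul, Matrix.mul_assoc]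
  have hpd2 (i j : Fin 3) :
      pdMatrix i (pdMatrix j F) x = F x * (B i * B j + connectionOfCurl j (-(B i * M x))) := by
    have hfield : pdMatrix j F =ᶠ[𝓝 x] fun y => F y * connectionOfCurl j (M y) :=
      eventually_of_mem (hΩ.mem_nhds hx) fun y hy => hpd y hy j
    rw [pdMatrix_congr hfield, pdMatrix_mul (hdiff x hx) (hM.map _), pdMatrix_map hM, hpdM,
      hpd x hx, Matrix.mul_add, Matrix.mul_assoc]
  refine eq_zero_of_compatibilityDefect_eq_zero fun i j => ?_
  have h := pdMatrix_comm (fun a b => (hF a b).contDiffAt (hΩ.mem_nhds hx)) i j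
  rw [hpd2, hpd2] at h
  have hcancel := congrArg ((F x)ᵀ * ·) h
  simp only [← Matrix.mul_assoc, horth x hx, Matrix.one_mul] at hcancel
  exact sub_eq_zero.mpr hcancel

lemma pdMatrix_eq_zero_of_curl_eq_const (hΩ : IsOpen Ω)
    (hF : ∀ a b, ContDiffOn ℝ 2 (fun y => F y a b) Ω)
    (horth : ∀ y ∈ Ω, (F y)ᵀ * F y = 1)
    (hcurl : ∀ y ∈ Ω, curlOfPartials (fun j => pdMatrix j F y) = α) (hx : x ∈ Ω) (j : Fin 3) :
    pdMatrix j F x = 0 := by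
  rw [pdMatrix_eq_mul_connectionOfCurl
      (entrywiseDifferentiableAt_of_contDiffOn hF two_ne_zero (hΩ.mem_nhds hx))
      (eventually_of_mem (hΩ.mem_nhds hx) horth) (hcurl x hx),
    transpose_mul_eq_zero_of_curl_eq_const hΩ hF horth hcurl hx, map_zero, Matrix.mul_zero]

end RotationFields

theorem rotations_with_constant_curl_are_constant
    (Ω : Set (Fin 3 → ℝ)) (hΩ : IsOpen Ω) (hconn : IsConnected Ω)
    (R : (Fin 3 → ℝ) → Fin 3 → Fin 3 → ℝ) (hR : ContDiffOn ℝ 2 R Ω)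
    (hSO : ∀ x ∈ Ω, (Matrix.of (R x))ᵀ * Matrix.of (R x) = 1 ∧ (Matrix.of (R x)).det = 1)
    (α : Matrix (Fin 3) (Fin 3) ℝ)
    (hcurl : ∀ x ∈ Ω, ∀ i l : Fin 3,
      ∑ j, ∑ k, eps l j k * pd j (fun y => R y i k) x = α i l) :
    (∀ x ∈ Ω, ∀ y ∈ Ω, R x = R y) ∧ α = 0 := by
  set F := fun y => Matrix.of (R y)
  have hF (a b : Fin 3) : ContDiffOn ℝ 2 (fun y => F y a b) Ω :=
    (contDiff_apply_apply ℝ ℝ a b).comp_contDiffOn hR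
  have horth (x) (hx : x ∈ Ω) : (F x)ᵀ * F x = 1 := (hSO x hx).1
  have hcurlF (x) (hx : x ∈ Ω) : curlOfPartials (fun j => pdMatrix j F x) = α :=
    Matrix.ext (hcurl x hx)
  refine ⟨fun x hx y hy => funext₂ fun a b => ?_, ?_⟩
  · exact hΩ.is_const_of_pd_eq_zero hconn.isPreconnected ((hF a b).differentiableOn two_ne_zero)
      (fun z hz i => congrFun₂ (pdMatrix_eq_zero_of_curl_eq_const hΩ hF horth hcurlF hz i) a b)
      hx hy
  · obtain ⟨x, hx⟩ := hconn.nonempty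
    rw [← Matrix.one_mul α, ← mul_eq_one_comm.mp (horth x hx), Matrix.mul_assoc,
      transpose_mul_eq_zero_of_curl_eq_const hΩ hF horth hcurlF hx, Matrix.mul_zero]
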